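/- Let A = ℚ⟨y₁, y₂, y₃⟩ be the free graded ℚ-algebra with each yᵣ in degree 1, and suppose Δ : A → A ⊗ A is a ℚ-algebra homomorphism such that Δ(yᵣ) = yᵣ ⊗ 1 + 1 ⊗ yᵣ + fᵣ for each r, where each fᵣ lies in ⊕_{i,j ≥ 1} Aᵢ ⊗ Aⱼ, and f₁ + f₂ + f₃ = 0. Then the degree-(1,1) component of Δ(y₃y₂ + y₃y₁ + y₂y₁) − (1 ⊗ e₂ + e₁ ⊗ e₁ + e₂ ⊗ 1) equals −(y₃ ⊗ y₃ + y₂ ⊗ y₂ + y₁ ⊗ y₁), where e₁ = y₁+y₂+y₃ and e₂ = y₃y₂ + y₃y₁ + y₂y₁; in particular it is nonzero, so Δ(e₂) ≠ 1 ⊗ e₂ + e₁ ⊗ e₁ + e₂ ⊗ 1. -/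

import Mathlib

open TensorProduct

noncomputable section

abbrev A3 := FreeAlgebra ℚ (Fin 3)

def y (r : Fin 3) : A3 := FreeAlgebra.ι ℚ r

/-- The degree-1 part of the free algebra. -/
def A3one : Submodule ℚ A3 := Submodule.span ℚ (Set.range (FreeAlgebra.ι ℚ))

/-- The degree-n part of the free algebra. -/
def deg (n : ℕ) : Submodule ℚ A3 := A3one ^ n

/-- The bidegree-(i,j) part of A ⊗ A. -/
def P (i j : ℕ) : Submodule ℚ (A3 ⊗[ℚ] A3) :=
  LinearMap.range (TensorProduct.map (deg i).subtype (deg j).subtype)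

def e1 : A3 := y 0 + y 1 + y 2
def e2 : A3 := y 2 * y 1 + y 2 * y 0 + y 1 * y 0

/-!
Write `Δ(yᵣ) = pᵣ + fᵣ` with `pᵣ = yᵣ ⊗ 1 + 1 ⊗ yᵣ`. Since each `pᵣ` has total degree 1 and each
`fᵣ` has both degrees `≥ 1`, `Δ(yₐ y_b) - pₐ p_b` has total degree `≥ 3` with both degrees `≥ 1`.
The products of the primitive `pᵣ`, however, produce only the off-diagonal part of `e₁ ⊗ e₁`:
`∑_{a>b} pₐ p_b = 1 ⊗ e₂ + e₁ ⊗ e₁ + e₂ ⊗ 1 - ∑ᵣ yᵣ ⊗ yᵣ`. The missing diagonal is detected by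
`a ⊗ b ↦ φ(a) φ(b)`, where `φ` is the coefficient of `X` after sending every `yᵣ` to `X`: this
functional vanishes outside bidegree `(1,1)` and equals `3` on `∑ᵣ yᵣ ⊗ yᵣ`.
-/

open scoped Pointwise

section TensorRange

variable {R A B : Type*} [CommSemiring R] [Semiring A] [Semiring B] [Algebra R A] [Algebra R B]

theorem range_map_subtype_mul_le (M M' : Submodule R A) (N N' : Submodule R B) :
    LinearMap.range (map M.subtype N.subtype) * LinearMap.range (map M'.subtype N'.subtype) ≤
      LinearMap.range (map (M * M').subtype (N * N').subtype) := by
  simp only [range_map_eq_span_tmul, Submodule.span_mul_span]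
  refine Submodule.span_le.mpr ?_
  rintro _ ⟨_, ⟨m, n, rfl⟩, _, ⟨m', n', rfl⟩, rfl⟩
  exact Submodule.subset_span ⟨⟨m * m', Submodule.mul_mem_mul m.2 m'.2⟩,
    ⟨n * n', Submodule.mul_mem_mul n.2 n'.2⟩, (Algebra.TensorProduct.tmul_mul_tmul _ _ _ _).symm⟩

end TensorRange

theorem y_mem_deg_one (r : Fin 3) : y r ∈ deg 1 := by
  rw [deg, pow_one]
  exact Submodule.subset_span ⟨r, rfl⟩

theorem one_mem_deg_zero : (1 : A3) ∈ deg 0 := by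
  rw [deg, pow_zero]
  exact Submodule.one_le.mp le_rfl

theorem deg_add (m n : ℕ) : deg (m + n) = deg m * deg n :=
  pow_add _ _ _

theorem tmul_mem_P {i j : ℕ} {a b : A3} (ha : a ∈ deg i) (hb : b ∈ deg j) :
    a ⊗ₜ[ℚ] b ∈ P i j :=
  ⟨⟨a, ha⟩ ⊗ₜ ⟨b, hb⟩, rfl⟩

theorem P_mul_P_le (i j k l : ℕ) : P i j * P k l ≤ P (i + k) (j + l) := by
  rw [P, P, P, deg_add, deg_add]
  exact range_map_subtype_mul_le _ _ _ _

def Psup (S : Set (ℕ × ℕ)) : Submodule ℚ (A3 ⊗[ℚ] A3) := ⨆ p ∈ S, P p.1 p.2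

theorem P_le_Psup {S : Set (ℕ × ℕ)} {i j : ℕ} (h : (i, j) ∈ S) : P i j ≤ Psup S :=
  le_iSup₂_of_le (i, j) h le_rfl

theorem Psup_mul_Psup_le {S T U : Set (ℕ × ℕ)} (h : S + T ⊆ U) :
    Psup S * Psup T ≤ Psup U := by
  simp only [Psup, Submodule.iSup_mul, Submodule.mul_iSup]
  refine iSup₂_le fun p hp => iSup₂_le fun q hq => (P_mul_P_le _ _ _ _).trans ?_
  exact P_le_Psup (h (Set.add_mem_add hq hp))

def linBideg : Set (ℕ × ℕ) := {(1, 0), (0, 1)}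

def posBideg : Set (ℕ × ℕ) := {p | 1 ≤ p.1 ∧ 1 ≤ p.2}

def highBideg : Set (ℕ × ℕ) := {p | 3 ≤ p.1 + p.2 ∧ 1 ≤ p.1 ∧ 1 ≤ p.2}

theorem mul_sub_mul_mem_Psup_high {w w' f f' : A3 ⊗[ℚ] A3}
    (hw : w ∈ Psup linBideg) (hw' : w' ∈ Psup linBideg)
    (hf : f ∈ Psup posBideg) (hf' : f' ∈ Psup posBideg) :
    (w + f) * (w' + f') - w * w' ∈ Psup highBideg := by
  have hlin_pos : linBideg + posBideg ⊆ highBideg := by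
    rintro _ ⟨p, hp, q, ⟨hq₁, hq₂⟩, rfl⟩
    rcases hp with rfl | rfl <;> simp only [highBideg, Set.mem_ofPred_eq, Prod.fst_add,
      Prod.snd_add] <;> omega
  have hpos_lin : posBideg + linBideg ⊆ highBideg := add_comm linBideg posBideg ▸ hlin_pos
  have hpos_pos : posBideg + posBideg ⊆ highBideg := by
    rintro _ ⟨p, ⟨hp₁, hp₂⟩, q, ⟨hq₁, hq₂⟩, rfl⟩
    simp only [highBideg, Set.mem_ofPred_eq, Prod.fst_add, Prod.snd_add]
    omega
  have h := add_mem (add_mem (Psup_mul_Psup_le hlin_pos (Submodule.mul_mem_mul hw hf'))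
    (Psup_mul_Psup_le hpos_lin (Submodule.mul_mem_mul hf hw')))
    (Psup_mul_Psup_le hpos_pos (Submodule.mul_mem_mul hf hf'))
  convert h using 1
  noncomm_ring

def prim (r : Fin 3) : A3 ⊗[ℚ] A3 := y r ⊗ₜ 1 + 1 ⊗ₜ y r

theorem prim_mem_Psup_lin (r : Fin 3) : prim r ∈ Psup linBideg :=
  add_mem (P_le_Psup (by simp [linBideg]) (tmul_mem_P (y_mem_deg_one r) one_mem_deg_zero))
    (P_le_Psup (by simp [linBideg]) (tmul_mem_P one_mem_deg_zero (y_mem_deg_one r)))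

theorem one_tmul_e2_add_e1_tmul_e1_add_e2_tmul_one :
    1 ⊗ₜ e2 + e1 ⊗ₜ e1 + e2 ⊗ₜ 1 = prim 2 * prim 1 + prim 2 * prim 0 + prim 1 * prim 0 +
      (y 2 ⊗ₜ y 2 + y 1 ⊗ₜ y 1 + y 0 ⊗ₜ y 0) := by
  simp only [prim, e1, e2, add_mul, mul_add, Algebra.TensorProduct.tmul_mul_tmul, one_mul,
    mul_one, tmul_add, add_tmul]
  abel

def ψ : A3 →ₐ[ℚ] Polynomial ℚ := FreeAlgebra.lift ℚ fun _ => Polynomial.X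

def φ : A3 →ₗ[ℚ] ℚ := Polynomial.lcoeff ℚ 1 ∘ₗ ψ.toLinearMap

def diagPairing : A3 ⊗[ℚ] A3 →ₗ[ℚ] ℚ := LinearMap.mul' ℚ ℚ ∘ₗ map φ φ

theorem φ_y (r : Fin 3) : φ (y r) = 1 := by
  simp [φ, y, ψ]

theorem ψ_mem_span_X_pow {n : ℕ} {x : A3} (hx : x ∈ deg n) :
    ψ x ∈ Submodule.span ℚ {Polynomial.X ^ n} := by
  have hone : A3one.map ψ.toLinearMap ≤ Submodule.span ℚ {Polynomial.X} := by
    rw [A3one, Submodule.map_span, Submodule.span_le]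
    rintro _ ⟨_, ⟨r, rfl⟩, rfl⟩
    simp [ψ, Submodule.mem_span_singleton_self]
  have hpow := pow_le_pow_left' hone n
  rw [← Submodule.map_pow, Submodule.span_pow, Set.singleton_pow] at hpow
  exact hpow ⟨x, hx, rfl⟩

theorem φ_eq_zero_of_mem_deg {n : ℕ} (hn : n ≠ 1) {x : A3} (hx : x ∈ deg n) : φ x = 0 := by
  obtain ⟨c, hc⟩ := Submodule.mem_span_singleton.mp (ψ_mem_span_X_pow hx)
  simp [φ, ← hc, Polynomial.coeff_X_pow, Ne.symm hn]

theorem φ_comp_subtype_deg {n : ℕ} (hn : n ≠ 1) : φ ∘ₗ (deg n).subtype = 0 :=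
  LinearMap.ext fun x => φ_eq_zero_of_mem_deg hn x.2

theorem P_le_ker_diagPairing {i j : ℕ} (h : i ≠ 1 ∨ j ≠ 1) :
    P i j ≤ LinearMap.ker diagPairing := by
  rw [P, LinearMap.range_le_ker_iff, diagPairing, LinearMap.comp_assoc, ← map_comp]
  rcases h with h | h <;> simp [φ_comp_subtype_deg h]

theorem Psup_high_le_ker_diagPairing : Psup highBideg ≤ LinearMap.ker diagPairing :=
  iSup₂_le fun _ hp =>
    P_le_ker_diagPairing (by simp only [highBideg, Set.mem_ofPred_eq] at hp; omega)

theorem diagPairing_diag :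
    diagPairing (y 2 ⊗ₜ[ℚ] y 2 + y 1 ⊗ₜ[ℚ] y 1 + y 0 ⊗ₜ[ℚ] y 0) = 3 := by
  norm_num [diagPairing, φ_y]

theorem stmt9_general (Δ : A3 →ₐ[ℚ] A3 ⊗[ℚ] A3) (f : Fin 3 → A3 ⊗[ℚ] A3)
    (hf : ∀ r, f r ∈ ⨆ (p : ℕ × ℕ) (_ : 1 ≤ p.1 ∧ 1 ≤ p.2), P p.1 p.2)
    (hΔ : ∀ r, Δ (y r) = y r ⊗ₜ[ℚ] 1 + 1 ⊗ₜ[ℚ] y r + f r) :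
    (∃ u ∈ ⨆ (p : ℕ × ℕ) (_ : 3 ≤ p.1 + p.2 ∧ 1 ≤ p.1 ∧ 1 ≤ p.2), P p.1 p.2,
      Δ e2 - (1 ⊗ₜ[ℚ] e2 + e1 ⊗ₜ[ℚ] e1 + e2 ⊗ₜ[ℚ] 1) =
        u - (y 2 ⊗ₜ[ℚ] y 2 + y 1 ⊗ₜ[ℚ] y 1 + y 0 ⊗ₜ[ℚ] y 0)) ∧
    Δ e2 ≠ 1 ⊗ₜ[ℚ] e2 + e1 ⊗ₜ[ℚ] e1 + e2 ⊗ₜ[ℚ] 1 := by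
  have hcross (a b : Fin 3) : Δ (y a * y b) - prim a * prim b ∈ Psup highBideg := by
    rw [map_mul, hΔ, hΔ]
    exact mul_sub_mul_mem_Psup_high (prim_mem_Psup_lin a) (prim_mem_Psup_lin b) (hf a) (hf b)
  obtain ⟨u, hu, key⟩ : ∃ u ∈ Psup highBideg,
      Δ e2 - (1 ⊗ₜ[ℚ] e2 + e1 ⊗ₜ[ℚ] e1 + e2 ⊗ₜ[ℚ] 1) =
        u - (y 2 ⊗ₜ[ℚ] y 2 + y 1 ⊗ₜ[ℚ] y 1 + y 0 ⊗ₜ[ℚ] y 0) := by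
    refine ⟨_, add_mem (add_mem (hcross 2 1) (hcross 2 0)) (hcross 1 0), ?_⟩
    rw [one_tmul_e2_add_e1_tmul_e1_add_e2_tmul_one, e2, map_add, map_add]
    abel
  refine ⟨⟨u, hu, key⟩, fun h => ?_⟩
  rw [h, sub_self, eq_comm, sub_eq_zero] at key
  have hzero : diagPairing u = 0 := Psup_high_le_ker_diagPairing hu
  rw [key, diagPairing_diag] at hzero
  norm_num at hzero

/-- If Δ(yᵣ) = yᵣ⊗1 + 1⊗yᵣ + fᵣ with fᵣ ∈ ⊕_{i,j≥1} Aᵢ⊗Aⱼ and f₁+f₂+f₃ = 0,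
then the (1,1)-component of Δ(e₂) − (1⊗e₂ + e₁⊗e₁ + e₂⊗1) is
−(y₃⊗y₃ + y₂⊗y₂ + y₁⊗y₁); in particular Δ(e₂) ≠ 1⊗e₂ + e₁⊗e₁ + e₂⊗1. -/
theorem stmt9 (Δ : A3 →ₐ[ℚ] A3 ⊗[ℚ] A3) (f : Fin 3 → A3 ⊗[ℚ] A3)
    (hf : ∀ r, f r ∈ ⨆ (p : ℕ × ℕ) (_ : 1 ≤ p.1 ∧ 1 ≤ p.2), P p.1 p.2)
    (hΔ : ∀ r, Δ (y r) = y r ⊗ₜ[ℚ] 1 + 1 ⊗ₜ[ℚ] y r + f r)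
    (hsum : f 0 + f 1 + f 2 = 0) :
    (∃ u ∈ ⨆ (p : ℕ × ℕ) (_ : 3 ≤ p.1 + p.2 ∧ 1 ≤ p.1 ∧ 1 ≤ p.2), P p.1 p.2,
      Δ e2 - (1 ⊗ₜ[ℚ] e2 + e1 ⊗ₜ[ℚ] e1 + e2 ⊗ₜ[ℚ] 1) =
        u - (y 2 ⊗ₜ[ℚ] y 2 + y 1 ⊗ₜ[ℚ] y 1 + y 0 ⊗ₜ[ℚ] y 0)) ∧
    Δ e2 ≠ 1 ⊗ₜ[ℚ] e2 + e1 ⊗ₜ[ℚ] e1 + e2 ⊗ₜ[ℚ] 1 :=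
  stmt9_general Δ f hf hΔ

end
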